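/- Every element h of the group H_{a,b} = ⟨[e_a,1],[1,e_b],[1,j],[j,1]⟩ ≤ SO(4) (a, b odd, coprime) can be written in the form h = [e_a,1]^{k₁}[1,e_b]^{k₂}[1,j]^{l₁}[j,1]^{l₂} with k₁ ∈ ℤ/aℤ, k₂ ∈ ℤ/bℤ, l₁ ∈ ℤ/4ℤ, l₂ ∈ ℤ/2ℤ. -/

import Mathlib

/-!
Write `A = [e_a,1]`, `B = [1,e_b]`, `J = [1,j]`, `K = [j,1]`. Since `A ^ (2a) = B ^ (2b) = J ^ 4 =
K ^ 4 = 1`, the group they generate is the monoid they generate, and the commutation relations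
show that a generator times a word `A ^ k₁ * B ^ k₂ * J ^ l₁ * K ^ l₂` is again such a word.
Its exponents are then reduced using `A ^ a = B ^ b = K ^ 2 = J ^ 2`, which is central, and
`J ^ 4 = 1`.
-/

open Quaternion Real

noncomputable section
open scoped Classical

/-- The linear map `x ↦ l · x · r̄` on `ℍ ≅ ℝ⁴`. -/
def qRot (l r : ℍ[ℝ]) : ℍ[ℝ] →ₗ[ℝ] ℍ[ℝ] where
  toFun x := l * x * star r
  map_add' x y := by simp [mul_add, add_mul]
  map_smul' c x := by simp [mul_smul_comm, smul_mul_assoc]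

/-- The rotation `[l,r] : x ↦ l · x · r̄` as an invertible linear map of `ℝ⁴ ≅ ℍ`
(for `l, r ≠ 0`; junk value `1` otherwise). -/
def qRotUnit (l r : ℍ[ℝ]) : (ℍ[ℝ] →ₗ[ℝ] ℍ[ℝ])ˣ :=
  if h : l ≠ 0 ∧ r ≠ 0 then
    { val := qRot l r
      inv := qRot l⁻¹ r⁻¹
      val_inv := by
        apply LinearMap.ext; intro x
        show l * (l⁻¹ * x * star r⁻¹) * star r = x
        have h1 : star (r⁻¹ : ℍ[ℝ]) * star r = 1 := by
          rw [← star_mul, mul_inv_cancel₀ h.2, star_one]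
        have h2 : l * l⁻¹ = 1 := mul_inv_cancel₀ h.1
        calc l * (l⁻¹ * x * star r⁻¹) * star r
            = (l * l⁻¹) * x * (star r⁻¹ * star r) := by noncomm_ring
          _ = x := by rw [h1, h2, one_mul, mul_one]
      inv_val := by
        apply LinearMap.ext; intro x
        show l⁻¹ * (l * x * star r) * star r⁻¹ = x
        have h1 : star r * star (r⁻¹ : ℍ[ℝ]) = 1 := by
          rw [← star_mul, inv_mul_cancel₀ h.2, star_one]
        have h2 : l⁻¹ * l = 1 := inv_mul_cancel₀ h.1
        calc l⁻¹ * (l * x * star r) * star r⁻¹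
            = (l⁻¹ * l) * x * (star r * star r⁻¹) := by noncomm_ring
          _ = x := by rw [h1, h2, one_mul, mul_one] }
  else 1

/-- The unit quaternion `e_p = cos(π/p) + sin(π/p)·i`. -/
def eQ (p : ℕ) : ℍ[ℝ] := ⟨Real.cos (π / p), Real.sin (π / p), 0, 0⟩

/-- The quaternion unit `j`. -/
def jQ : ℍ[ℝ] := ⟨0, 0, 1, 0⟩

/-- The group `H_{a,b} = ⟨[e_a,1], [1,e_b], [1,j], [j,1]⟩`. -/
def Hgrp (a b : ℕ) : Subgroup (ℍ[ℝ] →ₗ[ℝ] ℍ[ℝ])ˣ :=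
  Subgroup.closure {qRotUnit (eQ a) 1, qRotUnit 1 (eQ b), qRotUnit 1 jQ, qRotUnit jQ 1}

lemma qRotUnit_of_ne_zero {l r : ℍ[ℝ]} (hl : l ≠ 0) (hr : r ≠ 0) :
    (qRotUnit l r : ℍ[ℝ] →ₗ[ℝ] ℍ[ℝ]) = qRot l r := by
  rw [qRotUnit, dif_pos ⟨hl, hr⟩]

lemma qRotUnit_mul {l r l' r' : ℍ[ℝ]} (hl : l ≠ 0) (hr : r ≠ 0) (hl' : l' ≠ 0)
    (hr' : r' ≠ 0) :
    qRotUnit l r * qRotUnit l' r' = qRotUnit (l * l') (r * r') := by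
  ext x : 2
  rw [Units.val_mul, qRotUnit_of_ne_zero hl hr, qRotUnit_of_ne_zero hl' hr',
    qRotUnit_of_ne_zero (mul_ne_zero hl hl') (mul_ne_zero hr hr')]
  change l * (l' * x * star r') * star r = l * l' * x * star (r * r')
  rw [star_mul]
  noncomm_ring

lemma qRotUnit_one_one : qRotUnit 1 1 = 1 := by
  ext x : 2
  rw [qRotUnit_of_ne_zero one_ne_zero one_ne_zero]
  change 1 * x * star 1 = x
  simp

lemma qRotUnit_pow {l r : ℍ[ℝ]} (hl : l ≠ 0) (hr : r ≠ 0) (n : ℕ) :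
    qRotUnit l r ^ n = qRotUnit (l ^ n) (r ^ n) := by
  induction n with
  | zero => simp [qRotUnit_one_one]
  | succ n ih =>
    rw [pow_succ, ih, qRotUnit_mul (pow_ne_zero n hl) (pow_ne_zero n hr) hl hr, pow_succ, pow_succ]

lemma qRotUnit_inv {l r : ℍ[ℝ]} (hl : l ≠ 0) (hr : r ≠ 0) :
    (qRotUnit l r)⁻¹ = qRotUnit l⁻¹ r⁻¹ := by
  rw [inv_eq_iff_mul_eq_one, qRotUnit_mul hl hr (inv_ne_zero hl) (inv_ne_zero hr),
    mul_inv_cancel₀ hl, mul_inv_cancel₀ hr, qRotUnit_one_one]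

lemma qRotUnit_neg_left (l r : ℍ[ℝ]) : qRotUnit (-l) r = qRotUnit l (-r) := by
  by_cases h : l ≠ 0 ∧ r ≠ 0
  · ext x : 2
    rw [qRotUnit_of_ne_zero (neg_ne_zero.mpr h.1) h.2,
      qRotUnit_of_ne_zero h.1 (neg_ne_zero.mpr h.2)]
    change -l * x * star r = l * x * star (-r)
    simp
  · rw [qRotUnit, qRotUnit, dif_neg (by simpa using h), dif_neg (by simpa using h)]

lemma commute_qRotUnit_left_right {l r : ℍ[ℝ]} (hl : l ≠ 0) (hr : r ≠ 0) :
    Commute (qRotUnit l 1) (qRotUnit 1 r) := by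
  rw [Commute, SemiconjBy, qRotUnit_mul hl one_ne_zero one_ne_zero hr,
    qRotUnit_mul one_ne_zero hr hl one_ne_zero, mul_one, one_mul, mul_one, one_mul]

lemma normSq_eQ (p : ℕ) : normSq (eQ p) = 1 := by
  rw [normSq_def']
  simp [eQ, Real.cos_sq_add_sin_sq]

lemma eQ_ne_zero (p : ℕ) : eQ p ≠ 0 := by
  rw [← normSq_ne_zero, normSq_eQ]
  exact one_ne_zero

lemma jQ_ne_zero : jQ ≠ 0 := by
  intro h
  simpa [jQ] using congrArg QuaternionAlgebra.imJ h

lemma jQ_mul_self : jQ * jQ = -1 := by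
  ext <;> simp only [re_mul, imI_mul, imJ_mul, imK_mul] <;> simp [jQ]

lemma jQ_mul_eQ (p : ℕ) : jQ * eQ p = (eQ p)⁻¹ * jQ := by
  rw [Quaternion.inv_def, normSq_eQ, inv_one, one_smul]
  ext <;> simp only [re_mul, imI_mul, imJ_mul, imK_mul, re_star, imI_star, imJ_star, imK_star] <;>
    simp [jQ, eQ]

lemma eQ_pow (p n : ℕ) :
    eQ p ^ n = ⟨Real.cos (n * (π / p)), Real.sin (n * (π / p)), 0, 0⟩ := by
  induction n with
  | zero => ext <;> simp
  | succ n ih =>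
    rw [pow_succ]
    ext <;> simp only [re_mul, imI_mul, imJ_mul, imK_mul] <;> rw [ih] <;>
      simp [eQ, add_mul, Real.cos_add, Real.sin_add]
    ring

lemma eQ_pow_self {p : ℕ} (hp : p ≠ 0) : eQ p ^ p = -1 := by
  rw [eQ_pow, mul_div_cancel₀ π (Nat.cast_ne_zero.mpr hp)]
  ext <;> simp

section NormalForm

variable {G : Type*} [Group G]

structure HabRelations (A B J K : G) (a b : ℕ) : Prop where
  commute_A_B : Commute A B
  commute_A_J : Commute A J
  commute_B_K : Commute B K
  commute_J_K : Commute J K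
  K_mul_A : K * A = A⁻¹ * K
  J_mul_B : J * B = B⁻¹ * J
  A_pow : A ^ a = J ^ 2
  B_pow : B ^ b = J ^ 2
  K_sq : K ^ 2 = J ^ 2
  J_pow_four : J ^ 4 = 1

def normalWords (A B J K : G) : Set G :=
  {g | ∃ k₁ k₂ l₁ l₂ : ℕ, g = A ^ k₁ * B ^ k₂ * J ^ l₁ * K ^ l₂}

lemma mul_pow_eq_pow_mul_of_mul_eq_inv_mul {g x : G} {n : ℕ} (hn : n ≠ 0) (hx : x ^ n = 1)
    (h : g * x = x⁻¹ * g) (k : ℕ) : g * x ^ k = x ^ ((n - 1) * k) * g := by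
  have hinv : x⁻¹ = x ^ (n - 1) :=
    (eq_inv_of_mul_eq_one_left (by rw [pow_sub_one_mul hn, hx])).symm
  rw [((show SemiconjBy g x x⁻¹ from h).pow_right k).eq, hinv, pow_mul]

lemma pow_eq_pow_mod_mul_pow_div {x z : G} {n : ℕ} (h : x ^ n = z) (k : ℕ) :
    x ^ k = x ^ (k % n) * z ^ (k / n) := by
  rw [← h, ← pow_mul, ← pow_add, Nat.mod_add_div]

namespace HabRelations

variable {A B J K : G} {a b : ℕ}

lemma A_pow_mul_two (hR : HabRelations A B J K a b) : A ^ (a * 2) = 1 := by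
  rw [pow_mul, hR.A_pow, ← pow_mul, hR.J_pow_four]

lemma B_pow_mul_two (hR : HabRelations A B J K a b) : B ^ (b * 2) = 1 := by
  rw [pow_mul, hR.B_pow, ← pow_mul, hR.J_pow_four]

lemma mul_mem_normalWords (hR : HabRelations A B J K a b) (ha : 0 < a) (hb : 0 < b) {g x : G}
    (hg : g ∈ ({A, B, J, K} : Set G)) (hx : x ∈ normalWords A B J K) :
    g * x ∈ normalWords A B J K := by
  obtain ⟨k₁, k₂, l₁, l₂, rfl⟩ := hx
  simp only [mul_assoc]
  rcases hg with hg | hg | hg | hg <;> subst g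
  · exact ⟨k₁ + 1, k₂, l₁, l₂, by simp only [pow_succ', mul_assoc]⟩
  · refine ⟨k₁, k₂ + 1, l₁, l₂, ?_⟩
    rw [← mul_assoc, (hR.commute_A_B.pow_left k₁).symm.eq]
    simp only [pow_succ', mul_assoc]
  · refine ⟨k₁, (b * 2 - 1) * k₂, l₁ + 1, l₂, ?_⟩
    rw [← mul_assoc, (hR.commute_A_J.pow_left k₁).symm.eq, mul_assoc, ← mul_assoc J,
      mul_pow_eq_pow_mul_of_mul_eq_inv_mul (by omega) hR.B_pow_mul_two hR.J_mul_B]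
    simp only [pow_succ', mul_assoc]
  · refine ⟨(a * 2 - 1) * k₁, k₂, l₁, l₂ + 1, ?_⟩
    rw [← mul_assoc,
      mul_pow_eq_pow_mul_of_mul_eq_inv_mul (by omega) hR.A_pow_mul_two hR.K_mul_A, mul_assoc,
      ← mul_assoc K, (hR.commute_B_K.pow_left k₂).symm.eq, mul_assoc,
      ← mul_assoc K, (hR.commute_J_K.pow_left l₁).symm.eq]
    simp only [pow_succ', mul_assoc]

lemma closure_subset_normalWords (hR : HabRelations A B J K a b) (ha : 0 < a) (hb : 0 < b) :
    (Subgroup.closure {A, B, J, K} : Set G) ⊆ normalWords A B J K := by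
  have hfin : ∀ g ∈ ({A, B, J, K} : Set G), IsOfFinOrder g := by
    have hK : K ^ 4 = 1 := by
      rw [show 4 = 2 * 2 from rfl, pow_mul, hR.K_sq, ← pow_mul, hR.J_pow_four]
    rintro g (hg | hg | hg | hg) <;> subst g <;> refine isOfFinOrder_iff_pow_eq_one.mpr ?_
    exacts [⟨_, by omega, hR.A_pow_mul_two⟩, ⟨_, by omega, hR.B_pow_mul_two⟩,
      ⟨4, four_pos, hR.J_pow_four⟩, ⟨4, four_pos, hK⟩]
  intro g hg
  rw [SetLike.mem_coe, ← Subgroup.mem_toSubmonoid,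
    Subgroup.closure_toSubmonoid_of_isOfFinOrder hfin] at hg
  induction hg using Submonoid.closure_induction_left with
  | one => exact ⟨0, 0, 0, 0, by simp⟩
  | mul_left g hg x _ hx => exact hR.mul_mem_normalWords ha hb hg hx

lemma exists_reduced_normalWord (hR : HabRelations A B J K a b) (ha : 0 < a) (hb : 0 < b)
    (k₁ k₂ l₁ l₂ : ℕ) :
    ∃ m₁ m₂ n₁ n₂ : ℕ, m₁ < a ∧ m₂ < b ∧ n₁ < 4 ∧ n₂ < 2 ∧
      A ^ k₁ * B ^ k₂ * J ^ l₁ * K ^ l₂ = A ^ m₁ * B ^ m₂ * J ^ n₁ * K ^ n₂ := by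
  refine ⟨k₁ % a, k₂ % b, (l₁ + 2 * (k₁ / a + k₂ / b + l₂ / 2)) % 4, l₂ % 2,
    Nat.mod_lt _ ha, Nat.mod_lt _ hb, Nat.mod_lt _ four_pos, Nat.mod_lt _ two_pos, ?_⟩
  have hzB : Commute (J ^ 2) B := hR.B_pow ▸ Commute.pow_self B b
  have hzK : Commute (J ^ 2) K := hR.commute_J_K.pow_left 2
  rw [pow_eq_pow_mod_mul_pow_div hR.A_pow k₁, pow_eq_pow_mod_mul_pow_div hR.B_pow k₂,
    pow_eq_pow_mod_mul_pow_div hR.K_sq l₂, ← pow_eq_pow_mod _ hR.J_pow_four]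
  have hJ : ∀ q₁ q₂ q₃ : ℕ, (J ^ 2) ^ q₁ * (J ^ 2) ^ q₂ * J ^ l₁ * (J ^ 2) ^ q₃ =
      J ^ (l₁ + 2 * (q₁ + q₂ + q₃)) := by
    intro q₁ q₂ q₃
    simp only [← pow_mul, ← pow_add]
    ring_nf
  rw [← hJ]
  simp only [mul_assoc]
  rw [(hzB.pow_pow _ _).left_comm, (hzK.pow_pow _ _).symm.eq]

lemma exists_normalForm (hR : HabRelations A B J K a b) (ha : 0 < a) (hb : 0 < b) {g : G}
    (hg : g ∈ Subgroup.closure {A, B, J, K}) :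
    ∃ k₁ k₂ l₁ l₂ : ℕ, k₁ < a ∧ k₂ < b ∧ l₁ < 4 ∧ l₂ < 2 ∧
      g = A ^ k₁ * B ^ k₂ * J ^ l₁ * K ^ l₂ := by
  obtain ⟨k₁, k₂, l₁, l₂, rfl⟩ := hR.closure_subset_normalWords ha hb hg
  exact hR.exists_reduced_normalWord ha hb k₁ k₂ l₁ l₂

end HabRelations

end NormalForm

lemma habRelations_qRotUnit {a b : ℕ} (ha : a ≠ 0) (hb : b ≠ 0) :
    HabRelations (qRotUnit (eQ a) 1) (qRotUnit 1 (eQ b)) (qRotUnit 1 jQ) (qRotUnit jQ 1) a b := by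
  have h1 : (1 : ℍ[ℝ]) ≠ 0 := one_ne_zero
  have hea := eQ_ne_zero a
  have heb := eQ_ne_zero b
  have hj := jQ_ne_zero
  have hj2 : jQ ^ 2 = -1 := by rw [sq, jQ_mul_self]
  refine
    { commute_A_B := commute_qRotUnit_left_right hea heb
      commute_A_J := commute_qRotUnit_left_right hea hj
      commute_B_K := (commute_qRotUnit_left_right hj heb).symm
      commute_J_K := (commute_qRotUnit_left_right hj hj).symm
      K_mul_A := ?_, J_mul_B := ?_, A_pow := ?_, B_pow := ?_, K_sq := ?_, J_pow_four := ?_ }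
  · rw [qRotUnit_inv hea h1, qRotUnit_mul hj h1 hea h1,
      qRotUnit_mul (inv_ne_zero hea) (inv_ne_zero h1) hj h1, jQ_mul_eQ, inv_one]
  · rw [qRotUnit_inv h1 heb, qRotUnit_mul h1 hj h1 heb,
      qRotUnit_mul (inv_ne_zero h1) (inv_ne_zero heb) h1 hj, jQ_mul_eQ, inv_one]
  · rw [qRotUnit_pow hea h1, qRotUnit_pow h1 hj, eQ_pow_self ha, hj2, one_pow, one_pow,
      qRotUnit_neg_left]
  · rw [qRotUnit_pow h1 heb, qRotUnit_pow h1 hj, eQ_pow_self hb, hj2, one_pow, one_pow]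
  · rw [qRotUnit_pow hj h1, qRotUnit_pow h1 hj, hj2, one_pow, qRotUnit_neg_left]
  · rw [qRotUnit_pow h1 hj, one_pow, show jQ ^ 4 = (jQ ^ 2) ^ 2 from pow_mul jQ 2 2, hj2,
      neg_one_sq, qRotUnit_one_one]

theorem Hgrp_normal_form_general (a b : ℕ) (ha : Odd a) (hb : Odd b) :
    ∀ h ∈ Hgrp a b, ∃ k₁ k₂ l₁ l₂ : ℕ, k₁ < a ∧ k₂ < b ∧ l₁ < 4 ∧ l₂ < 2 ∧
      h = (qRotUnit (eQ a) 1) ^ k₁ * (qRotUnit 1 (eQ b)) ^ k₂ *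
            (qRotUnit 1 jQ) ^ l₁ * (qRotUnit jQ 1) ^ l₂ :=
  fun _ hh => (habRelations_qRotUnit ha.pos.ne' hb.pos.ne').exists_normalForm ha.pos hb.pos hh

/-- Every element of `H_{a,b}` (`a, b` odd and coprime) can be written in the normal form
`[e_a,1]^{k₁}[1,e_b]^{k₂}[1,j]^{l₁}[j,1]^{l₂}` with `k₁ ∈ ℤ/aℤ`, `k₂ ∈ ℤ/bℤ`,
`l₁ ∈ ℤ/4ℤ`, `l₂ ∈ ℤ/2ℤ`. -/
theorem Hgrp_normal_form (a b : ℕ) (ha : Odd a) (hb : Odd b) (hab : Nat.Coprime a b) :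
    ∀ h ∈ Hgrp a b, ∃ k₁ k₂ l₁ l₂ : ℕ, k₁ < a ∧ k₂ < b ∧ l₁ < 4 ∧ l₂ < 2 ∧
      h = (qRotUnit (eQ a) 1) ^ k₁ * (qRotUnit 1 (eQ b)) ^ k₂ *
            (qRotUnit 1 jQ) ^ l₁ * (qRotUnit jQ 1) ^ l₂ :=
  Hgrp_normal_form_general a b ha hb
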